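/- arXiv:2502.03174 — 5 statements merged into one kernel-verified Lean document; each statement's English description precedes it below -/
import Mathlib

section
/- For every integer k ≥ 2, all weight vectors w, w' in the simplex 𝒲_k, and all probability measures F₁, F'₁, …, F_k, F'_k on a measurable space (𝒳, 𝒜), the Hellinger distance satisfies h(∑_{i=1}^k wᵢ Fᵢ, ∑_{i=1}^k w'ᵢ F'ᵢ) ≤ h(w, w') + max_{1≤i≤k} h(Fᵢ, F'ᵢ), where h(w, w') denotes the Hellinger distance between the discrete probability distributions on {1,…,k} with weights w and w'. -/
open MeasureTheory Real
open scoped ENNReal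

noncomputable section

variable {𝒳 : Type*} [MeasurableSpace 𝒳]

/-- Squared Hellinger distance between two measures. -/
def hellingerSq (P Q : Measure 𝒳) : ℝ :=
  (1 / 2) * ∫ x, (Real.sqrt ((P.rnDeriv (P + Q) x).toReal)
      - Real.sqrt ((Q.rnDeriv (P + Q) x).toReal)) ^ 2 ∂(P + Q)

/-- Hellinger distance between two measures. -/
def hellinger (P Q : Measure 𝒳) : ℝ := Real.sqrt (hellingerSq P Q)

/-- Hellinger distance between two weight vectors. -/
def hellingerVec {k : ℕ} (w w' : Fin k → ℝ) : ℝ :=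
  Real.sqrt ((1 / 2) * ∑ i, (Real.sqrt (w i) - Real.sqrt (w' i)) ^ 2)

/-- Total variation distance. -/
def tvDist (P Q : Measure 𝒳) : ℝ :=
  ⨆ s : { s : Set 𝒳 // MeasurableSet s }, |(P s.1).toReal - (Q s.1).toReal|

/-- Mixture of measures with real weights. -/
def mix {k : ℕ} (β : Fin k → ℝ) (Q : Fin k → Measure 𝒳) : Measure 𝒳 :=
  ∑ i, ENNReal.ofReal (β i) • Q i

/-- Linear independence of finite measures, viewed in the real vector space of
finite signed measures: the only real linear combination vanishing on every
measurable set is the trivial one. -/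
def MeasLinIndep {k : ℕ} (F : Fin k → Measure 𝒳) : Prop :=
  ∀ c : Fin k → ℝ, (∀ s : Set 𝒳, MeasurableSet s → ∑ i, c i * (F i s).toReal = 0) → c = 0

/-- The constant Δ*(F₁,…,F_k). -/
def Δstar {k : ℕ} (F : Fin k → Measure 𝒳) : ℝ :=
  ⨅ I : { I : Finset (Fin k) // I.Nonempty ∧ I ≠ Finset.univ },
    ⨅ γ : { γ : Fin k → ℝ // (∀ i, 0 ≤ γ i) ∧ ∑ i ∈ I.1, γ i = 1 },
      ⨅ l : { l : Fin k → ℝ // (∀ i, 0 ≤ l i) ∧ ∑ i ∈ I.1ᶜ, l i = 1 },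
        tvDist (∑ i ∈ I.1, ENNReal.ofReal (γ.1 i) • F i)
          (∑ i ∈ I.1ᶜ, ENNReal.ofReal (l.1 i) • F i)

/-- ψ(√r) where ψ(x) = (x−1)/(x+1), with ψ(√∞) = 1. -/
def ψρ (r : ℝ≥0∞) : ℝ :=
  if r = ⊤ then 1 else (Real.sqrt r.toReal - 1) / (Real.sqrt r.toReal + 1)

/-- Ratio b/a in [0,∞] with conventions 0/0 = 1 and a/0 = ∞ for a > 0. -/
def densRatio (a b : ℝ) : ℝ≥0∞ :=
  if a = 0 ∧ b = 0 then 1 else ENNReal.ofReal b / ENNReal.ofReal a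

/-- The statistic T(x,q,q') = ∑ᵢ ψ(√(q'(xᵢ)/q(xᵢ))). -/
def Tρ {n : ℕ} (x : Fin n → 𝒳) (q q' : 𝒳 → ℝ) : ℝ :=
  ∑ i, ψρ (densRatio (q (x i)) (q' (x i)))

/-- The rational points of the simplex, 𝒲_k ∩ ℚ^k. -/
def ratSimplex (k : ℕ) : Set (Fin k → ℝ) :=
  { β | β ∈ stdSimplex ℝ (Fin k) ∧ ∀ i, ∃ r : ℚ, β i = (r : ℝ) }

/-- Mixture density ∑ⱼ βⱼ qⱼ. -/
def mixDens {k : ℕ} (q : Fin k → 𝒳 → ℝ) (β : Fin k → ℝ) : 𝒳 → ℝ :=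
  fun x => ∑ j, β j * q j x

/-- Υ(x,p) = sup over the model ℳ_mix(q₁,…,q_k) of T(x,p,·). -/
def Υρ {n k : ℕ} (q : Fin k → 𝒳 → ℝ) (x : Fin n → 𝒳) (p : 𝒳 → ℝ) : ℝ :=
  ⨆ β : ratSimplex k, Tρ x p (mixDens q β.1)

/-- The set 𝓔(x) of candidate ρ-estimators on the model ℳ_mix(q₁,…,q_k). -/
def rhoEstSet {n k : ℕ} (μ : Measure 𝒳) (q : Fin k → 𝒳 → ℝ) (x : Fin n → 𝒳) :
    Set (Measure 𝒳) :=
  { P | ∃ β ∈ ratSimplex k,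
      P = μ.withDensity (fun y => ENNReal.ofReal (mixDens q β y)) ∧
      Υρ q x (mixDens q β) < (⨅ β' : ratSimplex k, Υρ q x (mixDens q β'.1)) + 11.36 }

/-- Closure of a set of measures with respect to the Hellinger distance. -/
def hellClosure (S : Set (Measure 𝒳)) : Set (Measure 𝒳) :=
  { P | ∀ ε > 0, ∃ Q ∈ S, hellinger P Q < ε }

/-- The Bayes predictor associated with weights α and densities q. -/
def bayesPred {k : ℕ} (α : Fin k → ℝ) (q : Fin k → 𝒳 → ℝ) : 𝒳 → Fin k → ℝ :=
  fun x i => α i * q i x / ∑ j, α j * q j x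

/-- The joint distribution Π*_α on 𝒳 × [k] with ℙ(Y = i) = αᵢ and law of X given
Y = i equal to Q i. -/
def jointLaw {k : ℕ} (α : Fin k → ℝ) (Q : Fin k → Measure 𝒳) : Measure (𝒳 × Fin k) :=
  ∑ i, ENNReal.ofReal (α i) • ((Q i).prod (Measure.dirac i))

/-- Marginal calibration: fᵢ(X) = 𝔼[1_{Y=i} | fᵢ(X)] a.s. for all i. -/
def MarginallyCalibrated {k : ℕ} (f : 𝒳 → Fin k → ℝ) (Pm : Measure (𝒳 × Fin k)) : Prop :=
  ∀ i, (fun ω : 𝒳 × Fin k => f ω.1 i)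
    =ᵐ[Pm] Pm[(fun ω : 𝒳 × Fin k => if ω.2 = i then (1 : ℝ) else 0) |
        MeasurableSpace.comap (fun ω : 𝒳 × Fin k => f ω.1 i) inferInstance]

/-- Canonical calibration: fᵢ(X) = 𝔼[1_{Y=i} | f(X)] a.s. for all i. -/
def CanonicallyCalibrated {k : ℕ} (f : 𝒳 → Fin k → ℝ) (Pm : Measure (𝒳 × Fin k)) : Prop :=
  ∀ i, (fun ω : 𝒳 × Fin k => f ω.1 i)
    =ᵐ[Pm] Pm[(fun ω : 𝒳 × Fin k => if ω.2 = i then (1 : ℝ) else 0) |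
        MeasurableSpace.comap (fun ω : 𝒳 × Fin k => f ω.1) inferInstance]

open scoped Classical in
/-- Kullback–Leibler divergence. -/
def klDiv' (P Q : Measure 𝒳) : EReal :=
  if P ≪ Q ∧ Integrable (fun x => Real.log ((P.rnDeriv Q x).toReal)) P
  then ((∫ x, Real.log ((P.rnDeriv Q x).toReal) ∂P : ℝ) : EReal)
  else ⊤

end

/-!
Take densities with respect to `ν = ∑ Fᵢ + ∑ F'ᵢ`; then `√2 · h` is the `L²(ν)` distance between
the square roots of the densities. Insert the intermediate mixture `∑ w'ᵢ Fᵢ` and use the triangle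
inequality in `L²(ν)`. Both legs are controlled by the pointwise inequality
`(√(∑ aᵢ) - √(∑ bᵢ))² ≤ ∑ (√aᵢ - √bᵢ)²` (the reverse triangle inequality in `ℓ²`): with
`aᵢ = wᵢ pᵢ`, `bᵢ = w'ᵢ pᵢ` it integrates to `2 h²(w, w')`, and with `aᵢ = w'ᵢ pᵢ`, `bᵢ = w'ᵢ p'ᵢ`
to `∑ w'ᵢ · 2 h²(Fᵢ, F'ᵢ) ≤ 2 maxᵢ h²(Fᵢ, F'ᵢ)`.
-/

section

variable {𝒳 : Type*} [MeasurableSpace 𝒳]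

lemma sqrt_integral_sq_eq_norm_toLp {μ : Measure 𝒳} {f : 𝒳 → ℝ} (hf : MemLp f 2 μ) :
    √(∫ x, f x ^ 2 ∂μ) = ‖hf.toLp f‖ := by
  rw [Lp.norm_toLp, hf.eLpNorm_eq_integral_rpow_norm two_ne_zero ENNReal.ofNat_ne_top,
    ENNReal.toReal_ofReal (by positivity)]
  simp [sqrt_eq_rpow]

lemma sqrt_integral_sub_sq_le {μ : Measure 𝒳} {u m v : 𝒳 → ℝ}
    (hu : MemLp u 2 μ) (hm : MemLp m 2 μ) (hv : MemLp v 2 μ) :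
    √(∫ x, (u x - v x) ^ 2 ∂μ) ≤ √(∫ x, (u x - m x) ^ 2 ∂μ) + √(∫ x, (m x - v x) ^ 2 ∂μ) := by
  simp only [← Pi.sub_apply]
  rw [sqrt_integral_sq_eq_norm_toLp (hu.sub hv), sqrt_integral_sq_eq_norm_toLp (hu.sub hm),
    sqrt_integral_sq_eq_norm_toLp (hm.sub hv), hu.toLp_sub hv, hu.toLp_sub hm, hm.toLp_sub hv]
  exact norm_sub_le_norm_sub_add_norm_sub _ _ _

lemma sq_sqrt_sum_sub_sqrt_sum_le {ι : Type*} [Fintype ι] {a b : ι → ℝ}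
    (ha : ∀ i, 0 ≤ a i) (hb : ∀ i, 0 ≤ b i) :
    (√(∑ i, a i) - √(∑ i, b i)) ^ 2 ≤ ∑ i, (√(a i) - √(b i)) ^ 2 := by
  let x : EuclideanSpace ℝ ι := WithLp.toLp 2 fun i => √(a i)
  let y : EuclideanSpace ℝ ι := WithLp.toLp 2 fun i => √(b i)
  have hx : ‖x‖ = √(∑ i, a i) := by
    simp [x, EuclideanSpace.norm_eq, sq_sqrt (ha _)]
  have hy : ‖y‖ = √(∑ i, b i) := by
    simp [y, EuclideanSpace.norm_eq, sq_sqrt (hb _)]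
  have hxy : ‖x - y‖ ^ 2 = ∑ i, (√(a i) - √(b i)) ^ 2 := by
    simp [x, y, EuclideanSpace.norm_sq_eq]
  rw [← hx, ← hy, ← hxy, ← sq_abs]
  exact pow_le_pow_left₀ (abs_nonneg _) (abs_norm_sub_norm_le x y) 2

lemma memLp_two_sqrt {μ : Measure 𝒳} {f : 𝒳 → ℝ} (hf : Integrable f μ) (hf0 : ∀ x, 0 ≤ f x) :
    MemLp (fun x => √(f x)) 2 μ :=
  (memLp_two_iff_integrable_sq (continuous_sqrt.comp_aestronglyMeasurable hf.1)).2 <|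
    hf.congr (ae_of_all _ fun x => (sq_sqrt (hf0 x)).symm)

lemma integral_sq_sqrt_sum_sub_le {ι : Type*} [Fintype ι] {μ : Measure 𝒳} {a b : ι → 𝒳 → ℝ}
    (ha0 : ∀ i x, 0 ≤ a i x) (hb0 : ∀ i x, 0 ≤ b i x)
    (ha : ∀ i, Integrable (a i) μ) (hb : ∀ i, Integrable (b i) μ) :
    ∫ x, (√(∑ i, a i x) - √(∑ i, b i x)) ^ 2 ∂μ ≤ ∑ i, ∫ x, (√(a i x) - √(b i x)) ^ 2 ∂μ := by
  have hint : ∀ i, Integrable (fun x => (√(a i x) - √(b i x)) ^ 2) μ := fun i =>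
    ((memLp_two_sqrt (ha i) (ha0 i)).sub (memLp_two_sqrt (hb i) (hb0 i))).integrable_sq
  rw [← integral_finsetSum _ fun i _ => hint i]
  exact integral_mono_of_nonneg (ae_of_all _ fun x => sq_nonneg _)
    (integrable_finsetSum _ fun i _ => hint i)
    (ae_of_all _ fun x => sq_sqrt_sum_sub_sqrt_sum_le (ha0 · x) (hb0 · x))

lemma hellingerSq_nonneg (P Q : Measure 𝒳) : 0 ≤ hellingerSq P Q :=
  mul_nonneg (by norm_num) (integral_nonneg fun _ => sq_nonneg _)

lemma hellingerSq_eq_integral_rnDeriv {P Q ν : Measure 𝒳} [SigmaFinite P] [SigmaFinite Q]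
    [SigmaFinite ν] (hP : P ≪ ν) (hQ : Q ≪ ν) :
    hellingerSq P Q =
      (1 / 2) * ∫ x, (√(P.rnDeriv ν x).toReal - √(Q.rnDeriv ν x).toReal) ^ 2 ∂ν := by
  have hPQ : P + Q ≪ ν := hP.add_left hQ
  rw [hellingerSq, ← integral_toReal_rnDeriv_mul hPQ]
  congr 1
  refine integral_congr_ae ?_
  have hP' : P ≪ P + Q := Measure.absolutelyContinuous_of_le (Measure.le_add_right le_rfl)
  have hQ' : Q ≪ P + Q := Measure.absolutelyContinuous_of_le (Measure.le_add_left le_rfl)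
  filter_upwards [Measure.rnDeriv_mul_rnDeriv (κ := ν) hP', Measure.rnDeriv_mul_rnDeriv (κ := ν) hQ']
    with x hPx hQx
  rw [← hPx, ← hQx]
  simp only [Pi.mul_apply, ENNReal.toReal_mul, sqrt_mul' _ ENNReal.toReal_nonneg]
  rw [← sub_mul, mul_pow, sq_sqrt ENNReal.toReal_nonneg, mul_comm]

instance isFiniteMeasure_mix {k : ℕ} (β : Fin k → ℝ) (F : Fin k → Measure 𝒳)
    [∀ i, IsFiniteMeasure (F i)] :
    IsFiniteMeasure (mix β F) where
  measure_univ_lt_top := by simp [mix, ENNReal.mul_lt_top, measure_lt_top]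

lemma mix_eq_withDensity {k : ℕ} (β : Fin k → ℝ) (F : Fin k → Measure 𝒳) {ν : Measure 𝒳}
    [SigmaFinite ν] [∀ i, SigmaFinite (F i)] (hF : ∀ i, F i ≪ ν) :
    mix β F = ν.withDensity (fun x => ∑ i, ENNReal.ofReal (β i) * (F i).rnDeriv ν x) := by
  ext s hs
  rw [withDensity_apply _ hs, mix, Measure.finsetSum_apply,
    lintegral_finsetSum _ fun i _ => (Measure.measurable_rnDeriv _ _).const_mul _]
  refine Finset.sum_congr rfl fun i _ => ?_
  rw [Measure.smul_apply, smul_eq_mul, lintegral_const_mul _ (Measure.measurable_rnDeriv _ _),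
    ← withDensity_apply _ hs, Measure.withDensity_rnDeriv_eq _ _ (hF i)]

lemma toReal_rnDeriv_mix {k : ℕ} {β : Fin k → ℝ} (hβ : ∀ i, 0 ≤ β i) (F : Fin k → Measure 𝒳)
    {ν : Measure 𝒳} [SigmaFinite ν] [∀ i, SigmaFinite (F i)] (hF : ∀ i, F i ≪ ν) :
    (fun x => ((mix β F).rnDeriv ν x).toReal)
      =ᵐ[ν] fun x => ∑ i, β i * ((F i).rnDeriv ν x).toReal := by
  have hdens : (mix β F).rnDeriv ν
      =ᵐ[ν] fun x => ∑ i, ENNReal.ofReal (β i) * (F i).rnDeriv ν x := by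
    rw [mix_eq_withDensity β F hF]
    exact Measure.rnDeriv_withDensity ν
      (Finset.measurable_sum _ fun i _ => (Measure.measurable_rnDeriv _ _).const_mul _)
  filter_upwards [hdens, ae_all_iff.2 fun i => Measure.rnDeriv_lt_top (F i) ν] with x hx hfin
  rw [hx, ENNReal.toReal_sum fun i _ => ENNReal.mul_ne_top ENNReal.ofReal_ne_top (hfin i).ne]
  simp only [ENNReal.toReal_mul, ENNReal.toReal_ofReal (hβ _)]

lemma mix_absolutelyContinuous {k : ℕ} (β : Fin k → ℝ) {F : Fin k → Measure 𝒳} {ν : Measure 𝒳}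
    [SigmaFinite ν] [∀ i, SigmaFinite (F i)] (hF : ∀ i, F i ≪ ν) : mix β F ≪ ν := by
  rw [mix_eq_withDensity β F hF]
  exact withDensity_absolutelyContinuous _ _

lemma hellingerSq_mix_eq {k : ℕ} {w w' : Fin k → ℝ} (hw : ∀ i, 0 ≤ w i) (hw' : ∀ i, 0 ≤ w' i)
    (F F' : Fin k → Measure 𝒳) [∀ i, IsFiniteMeasure (F i)] [∀ i, IsFiniteMeasure (F' i)]
    {ν : Measure 𝒳} [SigmaFinite ν] (hF : ∀ i, F i ≪ ν) (hF' : ∀ i, F' i ≪ ν) :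
    hellingerSq (mix w F) (mix w' F') = (1 / 2) * ∫ x,
      (√(∑ i, w i * ((F i).rnDeriv ν x).toReal)
        - √(∑ i, w' i * ((F' i).rnDeriv ν x).toReal)) ^ 2 ∂ν := by
  rw [hellingerSq_eq_integral_rnDeriv (mix_absolutelyContinuous w hF)
    (mix_absolutelyContinuous w' hF')]
  congr 1
  refine integral_congr_ae ?_
  filter_upwards [toReal_rnDeriv_mix hw F hF, toReal_rnDeriv_mix hw' F' hF'] with x h h'
  rw [h, h']

lemma sqrt_half_integral_sq_sqrt_mix_sub_le {ι : Type*} [Fintype ι] {ν : Measure 𝒳}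
    {p p' : ι → 𝒳 → ℝ} (hp0 : ∀ i x, 0 ≤ p i x) (hp'0 : ∀ i x, 0 ≤ p' i x)
    (hp : ∀ i, Integrable (p i) ν) (hp' : ∀ i, Integrable (p' i) ν)
    (hp1 : ∀ i, ∫ x, p i x ∂ν = 1) {w w' : ι → ℝ} (hw : ∀ i, 0 ≤ w i)
    (hw' : w' ∈ stdSimplex ℝ ι) {s : ℝ} (hs : 0 ≤ s)
    (hps : ∀ i, (1 / 2) * ∫ x, (√(p i x) - √(p' i x)) ^ 2 ∂ν ≤ s ^ 2) :
    √((1 / 2) * ∫ x, (√(∑ i, w i * p i x) - √(∑ i, w' i * p' i x)) ^ 2 ∂ν)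
      ≤ √((1 / 2) * ∑ i, (√(w i) - √(w' i)) ^ 2) + s := by
  have mix_integrable : ∀ (β : ι → ℝ) (q : ι → 𝒳 → ℝ), (∀ i, Integrable (q i) ν) →
      Integrable (fun x => ∑ i, β i * q i x) ν := fun β q hq =>
    integrable_finsetSum _ fun i _ => (hq i).const_mul (β i)
  have mix_nonneg : ∀ (β : ι → ℝ) (q : ι → 𝒳 → ℝ), (∀ i, 0 ≤ β i) → (∀ i x, 0 ≤ q i x) →
      ∀ x, 0 ≤ ∑ i, β i * q i x := fun β q hβ hq x =>
    Finset.sum_nonneg fun i _ => mul_nonneg (hβ i) (hq i x)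
  have triangle := sqrt_integral_sub_sq_le
    (memLp_two_sqrt (mix_integrable w p hp) (mix_nonneg w p hw hp0))
    (memLp_two_sqrt (mix_integrable w' p hp) (mix_nonneg w' p hw'.1 hp0))
    (memLp_two_sqrt (mix_integrable w' p' hp') (mix_nonneg w' p' hw'.1 hp'0))
  have weights : ∫ x, (√(∑ i, w i * p i x) - √(∑ i, w' i * p i x)) ^ 2 ∂ν
      ≤ ∑ i, (√(w i) - √(w' i)) ^ 2 := by
    refine (integral_sq_sqrt_sum_sub_le (fun i x => mul_nonneg (hw i) (hp0 i x))
      (fun i x => mul_nonneg (hw'.1 i) (hp0 i x)) (fun i => (hp i).const_mul _)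
      (fun i => (hp i).const_mul _)).trans_eq (Finset.sum_congr rfl fun i _ => ?_)
    simp only [sqrt_mul (hw i), sqrt_mul (hw'.1 i), ← sub_mul, mul_pow,
      fun x => sq_sqrt (hp0 i x), integral_const_mul, hp1, mul_one]
  have components : ∫ x, (√(∑ i, w' i * p i x) - √(∑ i, w' i * p' i x)) ^ 2 ∂ν ≤ 2 * s ^ 2 := by
    refine (integral_sq_sqrt_sum_sub_le (fun i x => mul_nonneg (hw'.1 i) (hp0 i x))
      (fun i x => mul_nonneg (hw'.1 i) (hp'0 i x)) (fun i => (hp i).const_mul _)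
      (fun i => (hp' i).const_mul _)).trans ?_
    calc ∑ i, ∫ x, (√(w' i * p i x) - √(w' i * p' i x)) ^ 2 ∂ν
        = ∑ i, w' i * ∫ x, (√(p i x) - √(p' i x)) ^ 2 ∂ν := by
          refine Finset.sum_congr rfl fun i _ => ?_
          simp only [sqrt_mul (hw'.1 i), ← mul_sub, mul_pow, sq_sqrt (hw'.1 i),
            integral_const_mul]
      _ ≤ ∑ i, w' i * (2 * s ^ 2) := Finset.sum_le_sum fun i _ =>
          mul_le_mul_of_nonneg_left (by linarith [hps i]) (hw'.1 i)
      _ = 2 * s ^ 2 := by rw [← Finset.sum_mul, hw'.2, one_mul]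
  have half_sqrt : ∀ a : ℝ, √((1 / 2) * a) = √(1 / 2) * √a := fun a =>
    sqrt_mul (by norm_num) a
  calc √((1 / 2) * ∫ x, (√(∑ i, w i * p i x) - √(∑ i, w' i * p' i x)) ^ 2 ∂ν)
      ≤ √(1 / 2) * (√(∑ i, (√(w i) - √(w' i)) ^ 2) + √(2 * s ^ 2)) := by
        rw [half_sqrt]
        gcongr
        exact triangle.trans (add_le_add (sqrt_le_sqrt weights) (sqrt_le_sqrt components))
    _ = √((1 / 2) * ∑ i, (√(w i) - √(w' i)) ^ 2) + s := by
        rw [mul_add, ← half_sqrt, ← half_sqrt, show (1 / 2 : ℝ) * (2 * s ^ 2) = s ^ 2 by ring,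
          sqrt_sq hs]

theorem statement0_general {k : ℕ}
    (w w' : Fin k → ℝ) (hw : w ∈ stdSimplex ℝ (Fin k)) (hw' : w' ∈ stdSimplex ℝ (Fin k))
    (F F' : Fin k → Measure 𝒳)
    [∀ i, IsProbabilityMeasure (F i)] [∀ i, IsProbabilityMeasure (F' i)] :
    hellinger (mix w F) (mix w' F') ≤ hellingerVec w w' + ⨆ i, hellinger (F i) (F' i) := by
  set ν : Measure 𝒳 := Measure.sum F + Measure.sum F'
  have hF : ∀ i, F i ≪ ν := fun i =>
    Measure.absolutelyContinuous_of_le ((Measure.le_sum F i).trans (Measure.le_add_right le_rfl))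
  have hF' : ∀ i, F' i ≪ ν := fun i =>
    Measure.absolutelyContinuous_of_le ((Measure.le_sum F' i).trans (Measure.le_add_left le_rfl))
  have hS : ∀ i, hellinger (F i) (F' i) ≤ ⨆ j, hellinger (F j) (F' j) := fun i =>
    le_ciSup (Set.finite_range fun j => hellinger (F j) (F' j)).bddAbove i
  rw [hellinger, hellingerSq_mix_eq hw.1 hw'.1 F F' hF hF']
  refine sqrt_half_integral_sq_sqrt_mix_sub_le (fun _ _ => ENNReal.toReal_nonneg)
    (fun _ _ => ENNReal.toReal_nonneg) (fun _ => Measure.integrable_toReal_rnDeriv)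
    (fun _ => Measure.integrable_toReal_rnDeriv) (fun i => ?_) hw.1 hw'
    (Real.iSup_nonneg fun i => sqrt_nonneg _) fun i => ?_
  · simp [Measure.integral_toReal_rnDeriv (hF i)]
  · rw [← hellingerSq_eq_integral_rnDeriv (hF i) (hF' i), ← sq_sqrt (hellingerSq_nonneg _ _)]
    exact pow_le_pow_left₀ (sqrt_nonneg _) (hS i) 2

theorem statement0 {k : ℕ} (hk : 2 ≤ k)
    (w w' : Fin k → ℝ) (hw : w ∈ stdSimplex ℝ (Fin k)) (hw' : w' ∈ stdSimplex ℝ (Fin k))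
    (F F' : Fin k → Measure 𝒳)
    [∀ i, IsProbabilityMeasure (F i)] [∀ i, IsProbabilityMeasure (F' i)] :
    hellinger (mix w F) (mix w' F') ≤ hellingerVec w w' + ⨆ i, hellinger (F i) (F' i) :=
  statement0_general w w' hw hw' F F'

end
end

section
/- For every integer k ≥ 2, all probability measures F₁, …, F_k on a measurable space (𝒳, 𝒜), and all β, β̄ ∈ 𝒲_k, one has h(∑_{i=1}^k βᵢ Fᵢ, ∑_{i=1}^k β̄ᵢ Fᵢ) ≥ (Δ*(F₁,…,F_k) / (2√2)) ‖β − β̄‖₁, where Δ*(F₁,…,F_k) = inf over nonempty proper subsets I ⊊ [k], γ ∈ 𝒲_{|I|} and λ ∈ 𝒲_{k−|I|} of d_TV(∑_{i∈I} γᵢ Fᵢ, ∑_{i∈[k]∖I} λᵢ Fᵢ). -/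
open MeasureTheory Real
open scoped ENNReal

/-! Write `d = β - β'`. Splitting `d` into its positive and negative parts exhibits
`mix β F - mix β' F` as `‖d‖₁ / 2` times the difference of two mixtures supported on the
complementary index sets `{d > 0}` and `{d ≤ 0}`, so the total variation between the two
mixtures is at least `Δ* ‖d‖₁ / 2`. Total variation is at most `√2` times the Hellinger
distance, by Cauchy–Schwarz applied to `|p - q| = |√p - √q| (√p + √q)`. -/

namespace MeasureTheory

variable {α : Type*} [MeasurableSpace α] {μ : Measure α}

theorem integral_mul_le_sqrt_mul_sqrt_of_nonneg {f g : α → ℝ} (hf0 : 0 ≤ᵐ[μ] f)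
    (hg0 : 0 ≤ᵐ[μ] g) (hf : MemLp f 2 μ) (hg : MemLp g 2 μ) :
    ∫ x, f x * g x ∂μ ≤ √(∫ x, f x ^ 2 ∂μ) * √(∫ x, g x ^ 2 ∂μ) := by
  have hofReal : ENNReal.ofReal 2 = 2 := by norm_num
  have holder := integral_mul_le_Lp_mul_Lq_of_nonneg Real.HolderConjugate.two_two hf0 hg0
    (hofReal ▸ hf) (hofReal ▸ hg)
  simpa only [Real.rpow_two, Real.sqrt_eq_rpow, one_div] using holder

theorem two_mul_abs_setIntegral_le_integral_abs {f : α → ℝ} (hf : Integrable f μ)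
    (hf0 : ∫ x, f x ∂μ = 0) {s : Set α} (hs : MeasurableSet s) :
    2 * |∫ x in s, f x ∂μ| ≤ ∫ x, |f x| ∂μ := by
  have hcompl : ∫ x in sᶜ, f x ∂μ = -∫ x in s, f x ∂μ := by
    linarith [integral_add_compl hs hf]
  have hs_le : |∫ x in s, f x ∂μ| ≤ ∫ x in s, |f x| ∂μ := abs_integral_le_integral_abs
  have hsc_le : |∫ x in sᶜ, f x ∂μ| ≤ ∫ x in sᶜ, |f x| ∂μ := abs_integral_le_integral_abs
  rw [hcompl, abs_neg] at hsc_le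
  linarith [integral_add_compl hs hf.abs]

end MeasureTheory

section

variable {𝒳 : Type*} [MeasurableSpace 𝒳]

lemma abs_sqrt_sub_sqrt_mul_sqrt_add_sqrt {a b : ℝ} (ha : 0 ≤ a) (hb : 0 ≤ b) :
    |√a - √b| * (√a + √b) = |a - b| := by
  rw [← abs_of_nonneg (add_nonneg (Real.sqrt_nonneg a) (Real.sqrt_nonneg b)), ← abs_mul]
  congr 1
  linear_combination Real.sq_sqrt ha - Real.sq_sqrt hb

lemma hellinger_nonneg (P Q : Measure 𝒳) : 0 ≤ hellinger P Q := Real.sqrt_nonneg _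

lemma hellinger_sq (P Q : Measure 𝒳) : hellinger P Q ^ 2 = hellingerSq P Q :=
  Real.sq_sqrt <| mul_nonneg one_half_pos.le <| integral_nonneg fun _ => sq_nonneg _

theorem integral_abs_sub_rnDeriv_le_hellinger (P Q : Measure 𝒳) [IsProbabilityMeasure P]
    [IsProbabilityMeasure Q] :
    ∫ x, |(P.rnDeriv (P + Q) x).toReal - (Q.rnDeriv (P + Q) x).toReal| ∂(P + Q)
      ≤ 2 * √2 * hellinger P Q := by
  set ν := P + Q
  set p : 𝒳 → ℝ := fun x => (P.rnDeriv ν x).toReal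
  set q : 𝒳 → ℝ := fun x => (Q.rnDeriv ν x).toReal
  have hp0 : ∀ x, 0 ≤ p x := fun _ => ENNReal.toReal_nonneg
  have hq0 : ∀ x, 0 ≤ q x := fun _ => ENNReal.toReal_nonneg
  have hp : Integrable p ν := Measure.integrable_toReal_rnDeriv
  have hq : Integrable q ν := Measure.integrable_toReal_rnDeriv
  have hp1 : ∫ x, p x ∂ν = 1 := by
    simp [p, ν, Measure.integral_toReal_rnDeriv (Measure.AbsolutelyContinuous.rfl.add_right Q)]
  have hq1 : ∫ x, q x ∂ν = 1 := by
    simp [q, ν, Measure.integral_toReal_rnDeriv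
      (Measure.absolutelyContinuous_of_le (Measure.le_add_left le_rfl) : Q ≪ P + Q)]
  have hsqrt_memLp {r : 𝒳 → ℝ} (hr0 : ∀ x, 0 ≤ r x) (hr : Integrable r ν) :
      MemLp (fun x => √(r x)) 2 ν :=
    (memLp_two_iff_integrable_sq hr.aemeasurable.sqrt.aestronglyMeasurable).2
      (hr.congr (.of_forall fun x => (Real.sq_sqrt (hr0 x)).symm))
  have hdiff := (hsqrt_memLp hp0 hp).sub (hsqrt_memLp hq0 hq)
  have hsum := (hsqrt_memLp hp0 hp).add (hsqrt_memLp hq0 hq)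
  have hdiff_sq : ∫ x, |√(p x) - √(q x)| ^ 2 ∂ν = 2 * hellinger P Q ^ 2 := by
    rw [hellinger_sq, hellingerSq]
    simp only [sq_abs]
    ring
  have hsum_sq : ∫ x, (√(p x) + √(q x)) ^ 2 ∂ν ≤ 4 := by
    calc ∫ x, (√(p x) + √(q x)) ^ 2 ∂ν ≤ ∫ x, 2 * (p x + q x) ∂ν := by
          refine integral_mono hsum.integrable_sq ((hp.add hq).const_mul 2) fun x => ?_
          nlinarith [Real.sq_sqrt (hp0 x), Real.sq_sqrt (hq0 x), sq_nonneg (√(p x) - √(q x))]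
      _ = 4 := by rw [integral_const_mul, integral_add hp hq, hp1, hq1]; norm_num
  calc ∫ x, |p x - q x| ∂ν = ∫ x, |√(p x) - √(q x)| * (√(p x) + √(q x)) ∂ν := by
        simp only [abs_sqrt_sub_sqrt_mul_sqrt_add_sqrt (hp0 _) (hq0 _)]
    _ ≤ √(∫ x, |√(p x) - √(q x)| ^ 2 ∂ν) * √(∫ x, (√(p x) + √(q x)) ^ 2 ∂ν) :=
        integral_mul_le_sqrt_mul_sqrt_of_nonneg (.of_forall fun _ => abs_nonneg _)
          (.of_forall fun _ => by positivity) hdiff.abs hsum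
    _ ≤ √(2 * hellinger P Q ^ 2) * √4 := by
        rw [hdiff_sq]; gcongr
    _ = 2 * √2 * hellinger P Q := by
        rw [Real.sqrt_mul zero_le_two, Real.sqrt_sq (hellinger_nonneg P Q),
          show (4 : ℝ) = 2 ^ 2 by norm_num, Real.sqrt_sq zero_le_two]
        ring

lemma tvDist_nonneg (P Q : Measure 𝒳) : 0 ≤ tvDist P Q :=
  Real.iSup_nonneg fun _ => abs_nonneg _

theorem tvDist_le_sqrt_two_mul_hellinger (P Q : Measure 𝒳) [IsProbabilityMeasure P]
    [IsProbabilityMeasure Q] : tvDist P Q ≤ √2 * hellinger P Q := by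
  set ν := P + Q
  have hP : P ≪ ν := Measure.AbsolutelyContinuous.rfl.add_right Q
  have hQ : Q ≪ ν := Measure.absolutelyContinuous_of_le (Measure.le_add_left le_rfl)
  set f : 𝒳 → ℝ := fun x => (P.rnDeriv ν x).toReal - (Q.rnDeriv ν x).toReal
  have hf : Integrable f ν :=
    Measure.integrable_toReal_rnDeriv.sub Measure.integrable_toReal_rnDeriv
  have hf0 : ∫ x, f x ∂ν = 0 := by
    simp [f, integral_sub Measure.integrable_toReal_rnDeriv Measure.integrable_toReal_rnDeriv,
      Measure.integral_toReal_rnDeriv hP, Measure.integral_toReal_rnDeriv hQ]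
  refine Real.iSup_le (fun ⟨s, hs⟩ => ?_)
    (mul_nonneg (Real.sqrt_nonneg 2) (hellinger_nonneg P Q))
  have hsub : (P s).toReal - (Q s).toReal = ∫ x in s, f x ∂ν := by
    rw [integral_sub Measure.integrable_toReal_rnDeriv.integrableOn
      Measure.integrable_toReal_rnDeriv.integrableOn, Measure.setIntegral_toReal_rnDeriv hP,
      Measure.setIntegral_toReal_rnDeriv hQ, measureReal_def, measureReal_def]
  have hset := two_mul_abs_setIntegral_le_integral_abs hf hf0 hs
  have hhell := integral_abs_sub_rnDeriv_le_hellinger P Q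
  rw [hsub]
  linarith

section Mixtures

variable {ι : Type*} (t : Finset ι) (w : ι → ℝ) (F : ι → Measure 𝒳)

lemma toReal_sum_ofReal_smul_apply [∀ i, IsFiniteMeasure (F i)] (hw : ∀ i ∈ t, 0 ≤ w i)
    (s : Set 𝒳) :
    ((∑ i ∈ t, ENNReal.ofReal (w i) • F i) s).toReal = ∑ i ∈ t, w i * (F i s).toReal := by
  simp only [Measure.finsetSum_apply, Measure.smul_apply, smul_eq_mul]
  rw [ENNReal.toReal_sum fun i _ =>
    ENNReal.mul_ne_top ENNReal.ofReal_ne_top (measure_ne_top _ _)]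
  refine Finset.sum_congr rfl fun i hi => ?_
  rw [ENNReal.toReal_mul, ENNReal.toReal_ofReal (hw i hi)]

lemma isProbabilityMeasure_sum_ofReal_smul [∀ i, IsProbabilityMeasure (F i)]
    (hw : ∀ i ∈ t, 0 ≤ w i) (hsum : ∑ i ∈ t, w i = 1) :
    IsProbabilityMeasure (∑ i ∈ t, ENNReal.ofReal (w i) • F i) := by
  constructor
  simp only [Measure.finsetSum_apply, Measure.smul_apply, smul_eq_mul, measure_univ, mul_one]
  rw [← ENNReal.ofReal_sum_of_nonneg hw, hsum, ENNReal.ofReal_one]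

end Mixtures

lemma isProbabilityMeasure_mix {k : ℕ} (F : Fin k → Measure 𝒳)
    [∀ i, IsProbabilityMeasure (F i)] {β : Fin k → ℝ} (hβ : β ∈ stdSimplex ℝ (Fin k)) :
    IsProbabilityMeasure (mix β F) :=
  isProbabilityMeasure_sum_ofReal_smul _ _ F (fun i _ => hβ.1 i) hβ.2

lemma bddAbove_range_abs_sub_toReal (P Q : Measure 𝒳) [IsFiniteMeasure P] [IsFiniteMeasure Q] :
    BddAbove (Set.range fun s : { s : Set 𝒳 // MeasurableSet s } =>
      |(P s.1).toReal - (Q s.1).toReal|) := by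
  refine ⟨(P .univ).toReal + (Q .univ).toReal, ?_⟩
  rintro _ ⟨s, rfl⟩
  have hP := measureReal_mono (μ := P) (Set.subset_univ s.1)
  have hQ := measureReal_mono (μ := Q) (Set.subset_univ s.1)
  simp only [measureReal_def] at hP hQ
  exact (abs_sub _ _).trans (by simp only [abs_of_nonneg ENNReal.toReal_nonneg]; linarith)

lemma mul_tvDist_le_tvDist_of_sub_eq {P Q A B : Measure 𝒳} [IsFiniteMeasure P]
    [IsFiniteMeasure Q] {c : ℝ} (hc : 0 ≤ c)
    (h : ∀ s, (P s).toReal - (Q s).toReal = c * ((A s).toReal - (B s).toReal)) :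
    c * tvDist A B ≤ tvDist P Q := by
  rw [tvDist, Real.mul_iSup_of_nonneg hc]
  refine ciSup_mono (bddAbove_range_abs_sub_toReal P Q) fun s => ?_
  rw [h, abs_mul, abs_of_nonneg hc]

lemma Δstar_le_tvDist {k : ℕ} (F : Fin k → Measure 𝒳) {I : Finset (Fin k)} (hI : I.Nonempty)
    (hI' : I ≠ Finset.univ) {γ l : Fin k → ℝ} (hγ : ∀ i, 0 ≤ γ i) (hγI : ∑ i ∈ I, γ i = 1)
    (hl : ∀ i, 0 ≤ l i) (hlI : ∑ i ∈ Iᶜ, l i = 1) :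
    Δstar F ≤ tvDist (∑ i ∈ I, ENNReal.ofReal (γ i) • F i)
      (∑ i ∈ Iᶜ, ENNReal.ofReal (l i) • F i) := by
  unfold Δstar
  refine ciInf_le_of_le ⟨0, ?_⟩ ⟨I, hI, hI'⟩ ?_
  · rintro _ ⟨_, rfl⟩
    exact Real.iInf_nonneg fun _ => Real.iInf_nonneg fun _ => tvDist_nonneg _ _
  refine ciInf_le_of_le ⟨0, ?_⟩ ⟨γ, hγ, hγI⟩ ?_
  · rintro _ ⟨_, rfl⟩
    exact Real.iInf_nonneg fun _ => tvDist_nonneg _ _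
  refine ciInf_le_of_le ⟨0, ?_⟩ ⟨l, hl, hlI⟩ le_rfl
  rintro _ ⟨_, rfl⟩
  exact tvDist_nonneg _ _

lemma exists_split_of_sum_eq_zero {ι : Type*} [Fintype ι] [DecidableEq ι] {d : ι → ℝ}
    (hd : d ≠ 0) (hsum : ∑ i, d i = 0) :
    ∃ I : Finset ι, I.Nonempty ∧ I ≠ Finset.univ ∧ ∃ γ l : ι → ℝ,
      (∀ i, 0 ≤ γ i) ∧ ∑ i ∈ I, γ i = 1 ∧ (∀ i, 0 ≤ l i) ∧ ∑ i ∈ Iᶜ, l i = 1 ∧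
      ∀ x : ι → ℝ, ∑ i, d i * x i
        = (∑ i, |d i|) / 2 * (∑ i ∈ I, γ i * x i - ∑ i ∈ Iᶜ, l i * x i) := by
  set c := ∑ i, (d i)⁺
  have hneg : ∑ i, (d i)⁻ = c := by
    have h : ∑ i, ((d i)⁺ - (d i)⁻) = 0 := by simpa only [posPart_sub_negPart] using hsum
    rw [Finset.sum_sub_distrib, sub_eq_zero] at h
    exact h.symm
  have habs : ∑ i, |d i| = 2 * c := by
    simp only [← posPart_add_negPart, Finset.sum_add_distrib, hneg, c]; ring
  have hc : 0 < c := by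
    obtain ⟨j, hj⟩ := Function.ne_iff.1 hd
    have : 0 < ∑ i, |d i| :=
      Finset.sum_pos' (fun i _ => abs_nonneg _) ⟨j, Finset.mem_univ j, abs_pos.2 hj⟩
    linarith
  set I := Finset.univ.filter fun i => 0 < d i
  have hpos_off : ∀ i ∉ I, (d i)⁺ = 0 := fun i hi =>
    posPart_eq_zero.2 (not_lt.1 fun h => hi (Finset.mem_filter.2 ⟨Finset.mem_univ i, h⟩))
  have hneg_off : ∀ i ∉ Iᶜ, (d i)⁻ = 0 := fun i hi =>
    negPart_eq_zero.2 (Finset.mem_filter.1 (Finset.notMem_compl.1 hi)).2.le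
  have hsumI : ∀ x : ι → ℝ, ∑ i ∈ I, (d i)⁺ / c * x i = ∑ i, (d i)⁺ / c * x i := fun x =>
    Finset.sum_subset I.subset_univ fun i _ hi => by simp [hpos_off i hi]
  have hsumIc : ∀ x : ι → ℝ, ∑ i ∈ Iᶜ, (d i)⁻ / c * x i = ∑ i, (d i)⁻ / c * x i := fun x =>
    Finset.sum_subset Iᶜ.subset_univ fun i _ hi => by simp [hneg_off i hi]
  refine ⟨I, ?_, ?_, fun i => (d i)⁺ / c, fun i => (d i)⁻ / c, fun i => by positivity, ?_,
    fun i => by positivity, ?_, fun x => ?_⟩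
  · refine Finset.nonempty_iff_ne_empty.2 fun hI => hc.ne' ?_
    exact Finset.sum_eq_zero fun i _ => hpos_off i (hI ▸ Finset.notMem_empty i)
  · refine fun hI => hc.ne' (hneg ▸ Finset.sum_eq_zero fun i _ => hneg_off i ?_)
    simp [hI]
  · simpa [← Finset.sum_div, c, hc.ne'] using hsumI 1
  · simpa [← Finset.sum_div, hneg, hc.ne'] using hsumIc 1
  · rw [hsumI, hsumIc, habs, ← Finset.sum_sub_distrib, Finset.mul_sum]
    refine Finset.sum_congr rfl fun i _ => ?_
    field_simp
    rw [posPart_sub_negPart, mul_comm]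

theorem Δstar_mul_le_tvDist_mix {k : ℕ} (F : Fin k → Measure 𝒳)
    [∀ i, IsProbabilityMeasure (F i)]
    {β β' : Fin k → ℝ} (hβ : β ∈ stdSimplex ℝ (Fin k)) (hβ' : β' ∈ stdSimplex ℝ (Fin k)) :
    Δstar F * ((∑ i, |β i - β' i|) / 2) ≤ tvDist (mix β F) (mix β' F) := by
  have := isProbabilityMeasure_mix F hβ
  have := isProbabilityMeasure_mix F hβ'
  rcases eq_or_ne β β' with rfl | hne
  · simpa using tvDist_nonneg _ _
  have hsum : ∑ i, (β - β') i = 0 := by simp [Finset.sum_sub_distrib, hβ.2, hβ'.2]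
  obtain ⟨I, hI, hI', γ, l, hγ, hγI, hl, hlI, hsplit⟩ :=
    exists_split_of_sum_eq_zero (sub_ne_zero.2 hne) hsum
  have hmix : ∀ s, (mix β F s).toReal - (mix β' F s).toReal
      = (∑ i, |β i - β' i|) / 2 * (((∑ i ∈ I, ENNReal.ofReal (γ i) • F i) s).toReal
        - ((∑ i ∈ Iᶜ, ENNReal.ofReal (l i) • F i) s).toReal) := fun s => by
    simp only [mix, toReal_sum_ofReal_smul_apply _ _ _ (fun i _ => hβ.1 i),
      toReal_sum_ofReal_smul_apply _ _ _ (fun i _ => hβ'.1 i),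
      toReal_sum_ofReal_smul_apply _ _ _ (fun i _ => hγ i),
      toReal_sum_ofReal_smul_apply _ _ _ (fun i _ => hl i), ← Finset.sum_sub_distrib,
      ← sub_mul]
    exact hsplit _
  calc Δstar F * ((∑ i, |β i - β' i|) / 2)
      ≤ tvDist (∑ i ∈ I, ENNReal.ofReal (γ i) • F i) (∑ i ∈ Iᶜ, ENNReal.ofReal (l i) • F i)
        * ((∑ i, |β i - β' i|) / 2) := by
        gcongr
        exact Δstar_le_tvDist F hI hI' hγ hγI hl hlI
    _ ≤ tvDist (mix β F) (mix β' F) := by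
        rw [mul_comm]
        exact mul_tvDist_le_tvDist_of_sub_eq (by positivity) hmix

theorem statement1_general {k : ℕ}
    (F : Fin k → Measure 𝒳) [∀ i, IsProbabilityMeasure (F i)]
    (β β' : Fin k → ℝ) (hβ : β ∈ stdSimplex ℝ (Fin k)) (hβ' : β' ∈ stdSimplex ℝ (Fin k)) :
    Δstar F / (2 * Real.sqrt 2) * ∑ i, |β i - β' i| ≤ hellinger (mix β F) (mix β' F) := by
  have := isProbabilityMeasure_mix F hβ
  have := isProbabilityMeasure_mix F hβ'
  have hs2 : 0 < √2 := by positivity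
  calc Δstar F / (2 * √2) * ∑ i, |β i - β' i|
      = Δstar F * ((∑ i, |β i - β' i|) / 2) / √2 := by field_simp
    _ ≤ tvDist (mix β F) (mix β' F) / √2 := by gcongr; exact Δstar_mul_le_tvDist_mix F hβ hβ'
    _ ≤ hellinger (mix β F) (mix β' F) := by
        rw [div_le_iff₀ hs2, mul_comm]
        exact tvDist_le_sqrt_two_mul_hellinger _ _

theorem statement1 {k : ℕ} (hk : 2 ≤ k)
    (F : Fin k → Measure 𝒳) [∀ i, IsProbabilityMeasure (F i)]
    (β β' : Fin k → ℝ) (hβ : β ∈ stdSimplex ℝ (Fin k)) (hβ' : β' ∈ stdSimplex ℝ (Fin k)) :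
    Δstar F / (2 * Real.sqrt 2) * ∑ i, |β i - β' i| ≤ hellinger (mix β F) (mix β' F) :=
  statement1_general F β β' hβ hβ'

end
end

section
/- If the probability measures F₁, …, F_k on a measurable space (𝒳, 𝒜) are linearly independent as elements of the real vector space of finite signed measures on (𝒳, 𝒜), then the constant Δ*(F₁,…,F_k) = inf over nonempty proper subsets I ⊊ [k], γ ∈ 𝒲_{|I|} and λ ∈ 𝒲_{k−|I|} of d_TV(∑_{i∈I} γᵢ Fᵢ, ∑_{i∈[k]∖I} λᵢ Fᵢ) is strictly positive. -/
open MeasureTheory Real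
open scoped ENNReal

section

variable {𝒳 : Type*} [MeasurableSpace 𝒳]

/-! Write the difference of the two mixtures as the signed measure `∑ cᵢ Fᵢ`, with `c = γ` on
`I` and `c = -λ` off `I`. Their distance `d_TV` is `N(c) = sup_A |∑ cᵢ Fᵢ(A)|`, and `c` always
lies on the `ℓ¹`-sphere of radius `2`. `N` is Lipschitz, and by linear independence it vanishes
only at `c = 0`, so it has a positive minimum on that compact sphere: a lower bound uniform in
`I`, `γ` and `λ`. -/

open Finset

lemma measureReal_sum_smul_apply {ι : Type*} (F : ι → Measure 𝒳)
    [∀ i, IsFiniteMeasure (F i)] (J : Finset ι) {γ : ι → ℝ} (hγ : ∀ i, 0 ≤ γ i) (s : Set 𝒳) :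
    ((∑ i ∈ J, ENNReal.ofReal (γ i) • F i) s).toReal = ∑ i ∈ J, γ i * (F i s).toReal := by
  rw [Measure.coe_finsetSum, Finset.sum_apply, ENNReal.toReal_sum]
  · simp [ENNReal.toReal_ofReal (hγ _)]
  · exact fun i _ => by simp [ENNReal.mul_eq_top, measure_ne_top]

section LinearCombination

variable {ι : Type*} [Fintype ι]

noncomputable def linCombSup (F : ι → Measure 𝒳) (c : ι → ℝ) : ℝ :=
  ⨆ s : { s : Set 𝒳 // MeasurableSet s }, |∑ i, c i * (F i s.1).toReal|

variable (F : ι → Measure 𝒳) [∀ i, IsFiniteMeasure (F i)]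

lemma abs_sum_mul_measureReal_le (c : ι → ℝ) (s : Set 𝒳) :
    |∑ i, c i * (F i s).toReal| ≤ ∑ i, |c i| * (F i Set.univ).toReal := by
  refine (abs_sum_le_sum_abs _ _).trans (sum_le_sum fun i _ => ?_)
  rw [abs_mul, abs_of_nonneg ENNReal.toReal_nonneg]
  gcongr
  · exact measure_ne_top _ _
  · exact Set.subset_univ s

lemma bddAbove_range_linCombSup (c : ι → ℝ) :
    BddAbove (Set.range fun s : { s : Set 𝒳 // MeasurableSet s } =>
      |∑ i, c i * (F i s.1).toReal|) :=
  ⟨_, Set.forall_mem_range.2 fun s => abs_sum_mul_measureReal_le F c s.1⟩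

lemma le_linCombSup (c : ι → ℝ) {s : Set 𝒳} (hs : MeasurableSet s) :
    |∑ i, c i * (F i s).toReal| ≤ linCombSup F c :=
  le_ciSup (bddAbove_range_linCombSup F c) ⟨s, hs⟩

lemma lipschitzWith_linCombSup :
    LipschitzWith (∑ i, (F i Set.univ).toReal).toNNReal (linCombSup F) := by
  refine LipschitzWith.of_le_add_mul' _ fun c d => ?_
  have : Nonempty { s : Set 𝒳 // MeasurableSet s } := ⟨⟨∅, .empty⟩⟩
  refine ciSup_le fun s => ?_
  have hdiff : |∑ i, (c i - d i) * (F i s.1).toReal|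
      ≤ (∑ i, (F i Set.univ).toReal) * dist c d := by
    rw [sum_mul]
    refine (abs_sum_mul_measureReal_le F _ s.1).trans (sum_le_sum fun i _ => ?_)
    rw [mul_comm]
    gcongr
    exact dist_le_pi_dist c d i
  calc |∑ i, c i * (F i s.1).toReal|
      ≤ |∑ i, d i * (F i s.1).toReal| + |∑ i, (c i - d i) * (F i s.1).toReal| := by
        simp only [sub_mul, sum_sub_distrib]
        linarith [abs_sub_abs_le_abs_sub (∑ i, c i * (F i s.1).toReal)
          (∑ i, d i * (F i s.1).toReal)]
    _ ≤ linCombSup F d + (∑ i, (F i Set.univ).toReal) * dist c d :=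
        add_le_add (le_linCombSup F d s.2) hdiff

lemma tvDist_sum_smul_eq_linCombSup [DecidableEq ι] (I : Finset ι) {γ l : ι → ℝ}
    (hγ : ∀ i, 0 ≤ γ i) (hl : ∀ i, 0 ≤ l i) :
    tvDist (∑ i ∈ I, ENNReal.ofReal (γ i) • F i) (∑ i ∈ Iᶜ, ENNReal.ofReal (l i) • F i)
      = linCombSup F (I.piecewise γ (-l)) := by
  refine iSup_congr fun s => ?_
  rw [measureReal_sum_smul_apply F I hγ, measureReal_sum_smul_apply F Iᶜ hl,
    ← sum_add_sum_compl I, sub_eq_add_neg, ← sum_neg_distrib]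
  congr 2
  · exact sum_congr rfl fun i hi => by rw [piecewise_eq_of_mem _ _ _ hi]
  · exact sum_congr rfl fun i hi => by
      rw [piecewise_eq_of_notMem _ _ _ (mem_compl.1 hi), Pi.neg_apply, neg_mul]

end LinearCombination

lemma isCompact_setOf_sum_abs_eq {ι : Type*} [Fintype ι] (r : ℝ) :
    IsCompact {c : ι → ℝ | ∑ i, |c i| = r} := by
  refine Metric.isCompact_of_isClosed_isBounded (isClosed_eq (by fun_prop) continuous_const)
    ((Metric.isBounded_closedBall (x := 0) (r := r)).subset ?_)
  intro c (hc : ∑ i, |c i| = r)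
  rw [Metric.mem_closedBall, dist_zero_right,
    pi_norm_le_iff_of_nonneg (hc ▸ sum_nonneg fun i _ => abs_nonneg (c i))]
  exact fun i => hc ▸
    single_le_sum (f := fun i => |c i|) (fun j _ => abs_nonneg (c j)) (mem_univ i)

lemma sum_abs_piecewise_neg {ι : Type*} [Fintype ι] [DecidableEq ι] (I : Finset ι)
    {γ l : ι → ℝ} (hγ : ∀ i, 0 ≤ γ i) (hl : ∀ i, 0 ≤ l i) :
    ∑ i, |I.piecewise γ (-l) i| = ∑ i ∈ I, γ i + ∑ i ∈ Iᶜ, l i := by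
  rw [← sum_add_sum_compl I]
  congr 1
  · exact sum_congr rfl fun i hi => by rw [piecewise_eq_of_mem _ _ _ hi, abs_of_nonneg (hγ i)]
  · exact sum_congr rfl fun i hi => by
      rw [piecewise_eq_of_notMem _ _ _ (mem_compl.1 hi), Pi.neg_apply, abs_neg,
        abs_of_nonneg (hl i)]

lemma linCombSup_pos {k : ℕ} {F : Fin k → Measure 𝒳} [∀ i, IsFiniteMeasure (F i)]
    (hind : MeasLinIndep F) {c : Fin k → ℝ} (hc : c ≠ 0) : 0 < linCombSup F c := by
  obtain ⟨s, hs, hcs⟩ : ∃ s, MeasurableSet s ∧ ∑ i, c i * (F i s).toReal ≠ 0 := by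
    by_contra! h
    exact hc (hind c h)
  exact (abs_pos.2 hcs).trans_le (le_linCombSup F c hs)

lemma exists_pos_le_linCombSup {k : ℕ} {F : Fin k → Measure 𝒳}
    [∀ i, IsFiniteMeasure (F i)] (hind : MeasLinIndep F) :
    ∃ m > 0, ∀ c : Fin k → ℝ, ∑ i, |c i| = 2 → m ≤ linCombSup F c :=
  (isCompact_setOf_sum_abs_eq 2).exists_forall_le'
    (lipschitzWith_linCombSup F).continuous.continuousOn
    fun c hc => linCombSup_pos hind fun h => by simp [h] at hc

lemma nonempty_weights {ι : Type*} {J : Finset ι} (hJ : J.Nonempty) :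
    Nonempty { γ : ι → ℝ // (∀ i, 0 ≤ γ i) ∧ ∑ i ∈ J, γ i = 1 } := by
  classical
  obtain ⟨j, hj⟩ := hJ
  refine ⟨Pi.single j 1, fun i => ?_, by simp [hj]⟩
  by_cases h : i = j <;> simp [h]

lemma nonempty_proper_subsets {k : ℕ} (hk : 2 ≤ k) :
    Nonempty { I : Finset (Fin k) // I.Nonempty ∧ I ≠ Finset.univ } := by
  refine ⟨{⟨0, by omega⟩}, singleton_nonempty _, fun h => ?_⟩
  have := congrArg card h
  simp only [card_singleton, card_univ, Fintype.card_fin] at this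
  omega

theorem statement2 {k : ℕ} (hk : 2 ≤ k)
    (F : Fin k → Measure 𝒳) [∀ i, IsProbabilityMeasure (F i)]
    (hind : MeasLinIndep F) : 0 < Δstar F := by
  obtain ⟨m, hm, hle⟩ := exists_pos_le_linCombSup hind
  have := nonempty_proper_subsets hk
  refine hm.trans_le (le_ciInf fun I => ?_)
  have := nonempty_weights I.2.1
  have := nonempty_weights
    (nonempty_iff_ne_empty.2 (mt (compl_eq_empty_iff I.1).1 I.2.2))
  refine le_ciInf fun γ => le_ciInf fun l => ?_
  rw [tvDist_sum_smul_eq_linCombSup F I.1 γ.2.1 l.2.1]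
  refine hle _ ?_
  rw [sum_abs_piecewise_neg I.1 γ.2.1 l.2.1, γ.2.2, l.2.2]
  norm_num

end
end

section
/- Let Q*₁,…,Q*_k be probability measures on (𝒳,𝒜) with densities q*₁,…,q*_k with respect to a σ-finite measure μ, set Q*_Σ = Q*₁ + ⋯ + Q*_k, let α ∈ 𝒲_k with αᵢ > 0 for all i, and let f^α be the Bayes predictor, f^α_i(x) = αᵢ q*ᵢ(x) / ∑_{j=1}^k αⱼ q*ⱼ(x) (defined on the support of P_α = ∑ⱼ αⱼ Q*ⱼ). Then the measures f^α₁·Q*_Σ, …, f^α_k·Q*_Σ are linearly independent in the space of finite signed measures if and only if Q*₁,…,Q*_k are linearly independent. -/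
open MeasureTheory Real
open scoped ENNReal

/-
The measure `f^α_i · Q*_Σ` has `μ`-density `f^α_i · ∑ⱼ q*ⱼ = r · αᵢ q*ᵢ` with
`r = ∑ⱼ q*ⱼ / ∑ⱼ αⱼ q*ⱼ`. A combination of finite measures with densities vanishes iff
the same combination of the densities vanishes `μ`-a.e.; the common factor `r` vanishes
only where every `q*ᵢ` does, and the weights `αᵢ > 0` can be absorbed into the
coefficients.
-/

open MeasureTheory Filter Finset

section WithDensityOfReal

variable {X : Type*} [MeasurableSpace X] {ν : Measure X}

theorem integrable_of_isFiniteMeasure_withDensity_ofReal {g : X → ℝ} (hg0 : 0 ≤ g)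
    (hg : Measurable g) [IsFiniteMeasure (ν.withDensity fun x => ENNReal.ofReal (g x))] :
    Integrable g ν := by
  refine ⟨hg.aestronglyMeasurable, ?_⟩
  rw [hasFiniteIntegral_iff_ofReal (ae_of_all _ hg0), ← setLIntegral_univ,
    ← withDensity_apply _ MeasurableSet.univ]
  exact measure_lt_top _ _

theorem toReal_withDensity_ofReal_apply {g : X → ℝ} (hg0 : 0 ≤ g)
    (hg : AEStronglyMeasurable g ν) {s : Set X} (hs : MeasurableSet s) :
    (ν.withDensity (fun x => ENNReal.ofReal (g x)) s).toReal = ∫ x in s, g x ∂ν := by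
  rw [withDensity_apply _ hs, integral_eq_lintegral_of_nonneg_ae (ae_of_all _ hg0) hg.restrict]

theorem finset_sum_withDensity_ofReal {ι : Type*} (s : Finset ι) {g : ι → X → ℝ}
    (hg0 : ∀ i, 0 ≤ g i) (hg : ∀ i, Measurable (g i)) :
    ∑ i ∈ s, ν.withDensity (fun x => ENNReal.ofReal (g i x))
      = ν.withDensity fun x => ENNReal.ofReal (∑ i ∈ s, g i x) := by
  ext t ht
  rw [Measure.finsetSum_apply, withDensity_apply _ ht]
  simp_rw [withDensity_apply _ ht]
  rw [← lintegral_finsetSum _ fun i _ => (hg i).ennreal_ofReal]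
  simp_rw [ENNReal.ofReal_sum_of_nonneg fun i _ => hg0 i _]

theorem withDensity_ofReal_withDensity_ofReal {f g : X → ℝ} (hf0 : 0 ≤ f) (hf : Measurable f)
    (hg : Measurable g) :
    (ν.withDensity fun x => ENNReal.ofReal (f x)).withDensity (fun x => ENNReal.ofReal (g x))
      = ν.withDensity fun x => ENNReal.ofReal (g x * f x) := by
  rw [← withDensity_mul _ hf.ennreal_ofReal hg.ennreal_ofReal]
  congr 1 with x
  rw [Pi.mul_apply, ENNReal.ofReal_mul' (hf0 x), mul_comm]

theorem ae_eq_zero_iff_forall_setIntegral_eq_zero {f : X → ℝ} (hf : Integrable f ν) :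
    f =ᵐ[ν] 0 ↔ ∀ s, MeasurableSet s → ∫ x in s, f x ∂ν = 0 :=
  ⟨fun h _ _ => integral_eq_zero_of_ae (ae_restrict_of_ae h),
    fun h => hf.ae_eq_zero_of_forall_setIntegral_eq_zero fun s hs _ => h s hs⟩

end WithDensityOfReal

section AELinIndep

variable {X : Type*} [MeasurableSpace X] {k : ℕ}

def AELinIndep (ν : Measure X) (g : Fin k → X → ℝ) : Prop :=
  ∀ c : Fin k → ℝ, (fun x => ∑ i, c i * g i x) =ᵐ[ν] 0 → c = 0

variable {ν : Measure X}

theorem measLinIndep_withDensity_ofReal_iff {g : Fin k → X → ℝ} (hg0 : ∀ i, 0 ≤ g i)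
    (hg : ∀ i, Integrable (g i) ν) :
    MeasLinIndep (fun i => ν.withDensity fun x => ENNReal.ofReal (g i x)) ↔ AELinIndep ν g := by
  refine forall_congr' fun c => imp_congr_left ?_
  rw [ae_eq_zero_iff_forall_setIntegral_eq_zero
    (integrable_finsetSum _ fun i _ => (hg i).const_mul (c i))]
  refine forall₂_congr fun s hs => ?_
  rw [integral_finsetSum _ fun i _ => ((hg i).const_mul (c i)).integrableOn]
  simp_rw [integral_const_mul,
    toReal_withDensity_ofReal_apply (hg0 _) (hg _).aestronglyMeasurable hs]

theorem aeLinIndep_const_mul_iff {g : Fin k → X → ℝ} {a : Fin k → ℝ}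
    (ha : ∀ i, a i ≠ 0) :
    AELinIndep ν (fun i x => a i * g i x) ↔ AELinIndep ν g := by
  constructor
  · intro h c hc
    have hca := h (fun i => c i / a i)
      (by simpa [← mul_assoc, div_mul_cancel₀ _ (ha _)] using hc)
    funext i
    simpa [ha i] using congrFun hca i
  · intro h c hc
    have hca := h (fun i => c i * a i) (by simpa [mul_assoc] using hc)
    funext i
    simpa [ha i] using congrFun hca i

theorem aeLinIndep_mul_left_iff {g : Fin k → X → ℝ} {r : X → ℝ}
    (hr : ∀ x, r x = 0 → ∀ i, g i x = 0) :
    AELinIndep ν (fun i x => r x * g i x) ↔ AELinIndep ν g := by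
  refine forall_congr' fun c => imp_congr_left (eventually_congr (ae_of_all _ fun x => ?_))
  simp only [Pi.zero_apply, mul_left_comm (c _), ← mul_sum]
  by_cases hx : r x = 0 <;> simp [hx, hr x]

end AELinIndep

section BayesPred

variable {X : Type*} {k : ℕ} {α : Fin k → ℝ} {q : Fin k → X → ℝ} {x : X}

theorem bayesPred_nonneg (hα : ∀ i, 0 ≤ α i) (hq : ∀ i, 0 ≤ q i x) (i : Fin k) :
    0 ≤ bayesPred α q x i :=
  div_nonneg (mul_nonneg (hα i) (hq i)) (sum_nonneg fun j _ => mul_nonneg (hα j) (hq j))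

theorem bayesPred_le_one (hα : ∀ i, 0 ≤ α i) (hq : ∀ i, 0 ≤ q i x) (i : Fin k) :
    bayesPred α q x i ≤ 1 :=
  div_le_one_of_le₀ (single_le_sum (fun j _ => mul_nonneg (hα j) (hq j)) (mem_univ i))
    (sum_nonneg fun j _ => mul_nonneg (hα j) (hq j))

theorem bayesPred_mul_sum_nonneg (hα : ∀ i, 0 ≤ α i) (hq : ∀ i, 0 ≤ q i x) (i : Fin k) :
    0 ≤ bayesPred α q x i * ∑ j, q j x :=
  mul_nonneg (bayesPred_nonneg hα hq i) (sum_nonneg fun j _ => hq j)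

theorem bayesPred_mul_sum (α : Fin k → ℝ) (q : Fin k → X → ℝ) (x : X) (i : Fin k) :
    bayesPred α q x i * ∑ j, q j x
      = ((∑ j, q j x) / ∑ j, α j * q j x) * (α i * q i x) := by
  unfold bayesPred
  ring

variable [MeasurableSpace X] {ν : Measure X}

theorem measurable_bayesPred (hq : ∀ i, Measurable (q i)) (i : Fin k) :
    Measurable fun x => bayesPred α q x i := by
  unfold bayesPred
  fun_prop

theorem withDensity_bayesPred (hq0 : ∀ i x, 0 ≤ q i x) (hq : ∀ i, Measurable (q i))
    (i : Fin k) :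
    (∑ j, ν.withDensity fun x => ENNReal.ofReal (q j x)).withDensity
        (fun x => ENNReal.ofReal (bayesPred α q x i))
      = ν.withDensity fun x => ENNReal.ofReal (bayesPred α q x i * ∑ j, q j x) := by
  rw [finset_sum_withDensity_ofReal _ (fun j => hq0 j) hq,
    withDensity_ofReal_withDensity_ofReal (fun x => sum_nonneg fun j _ => hq0 j x)
      (Finset.measurable_sum _ fun j _ => hq j) (measurable_bayesPred hq i)]

theorem integrable_bayesPred_mul_sum (hα : ∀ i, 0 ≤ α i) (hq0 : ∀ i x, 0 ≤ q i x)
    (hqm : ∀ i, Measurable (q i)) (hq : ∀ i, Integrable (q i) ν) (i : Fin k) :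
    Integrable (fun x => bayesPred α q x i * ∑ j, q j x) ν := by
  have hm := (measurable_bayesPred (α := α) hqm i).mul
    (Finset.measurable_sum univ fun j _ => hqm j)
  refine (integrable_finsetSum univ fun j _ => hq j).mono' hm.aestronglyMeasurable
    (ae_of_all _ fun x => ?_)
  rw [Real.norm_of_nonneg (bayesPred_mul_sum_nonneg hα (hq0 · x) i)]
  exact mul_le_of_le_one_left (sum_nonneg fun j _ => hq0 j x) (bayesPred_le_one hα (hq0 · x) i)

theorem aeLinIndep_bayesPred_mul_sum_iff (hα : ∀ i, 0 < α i) (hq : ∀ i x, 0 ≤ q i x) :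
    AELinIndep ν (fun i x => bayesPred α q x i * ∑ j, q j x) ↔ AELinIndep ν q := by
  simp_rw [bayesPred_mul_sum]
  rw [aeLinIndep_mul_left_iff, aeLinIndep_const_mul_iff fun i => (hα i).ne']
  intro x hx i
  rcases div_eq_zero_iff.1 hx with h | h
  · simp [(sum_eq_zero_iff_of_nonneg fun j _ => hq j x).1 h i (mem_univ i)]
  · exact (sum_eq_zero_iff_of_nonneg fun j _ => mul_nonneg (hα j).le (hq j x)).1 h i (mem_univ i)

end BayesPred

section

variable {𝒳 : Type*} [MeasurableSpace 𝒳]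

theorem statement12_general {k : ℕ}
    (Qstar : Fin k → Measure 𝒳) [∀ i, IsProbabilityMeasure (Qstar i)]
    (μ : Measure 𝒳)
    (qstar : Fin k → 𝒳 → ℝ) (hq_meas : ∀ i, Measurable (qstar i))
    (hq_nonneg : ∀ i x, 0 ≤ qstar i x)
    (hQq : ∀ i, Qstar i = μ.withDensity fun x => ENNReal.ofReal (qstar i x))
    (α : Fin k → ℝ) (hαpos : ∀ i, 0 < α i) :
    (MeasLinIndep fun i =>
        (∑ j, Qstar j).withDensity fun x => ENNReal.ofReal (bayesPred α qstar x i))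
      ↔ MeasLinIndep Qstar := by
  have hq_int (i : Fin k) : Integrable (qstar i) μ := by
    have : IsFiniteMeasure (μ.withDensity fun x => ENNReal.ofReal (qstar i x)) :=
      hQq i ▸ inferInstance
    exact integrable_of_isFiniteMeasure_withDensity_ofReal (hq_nonneg i) (hq_meas i)
  have hα (i : Fin k) : 0 ≤ α i := (hαpos i).le
  simp_rw [funext hQq, withDensity_bayesPred hq_nonneg hq_meas]
  rw [measLinIndep_withDensity_ofReal_iff
      (fun i x => bayesPred_mul_sum_nonneg hα (hq_nonneg · x) i)
      (integrable_bayesPred_mul_sum hα hq_nonneg hq_meas hq_int),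
    measLinIndep_withDensity_ofReal_iff hq_nonneg hq_int,
    aeLinIndep_bayesPred_mul_sum_iff hαpos hq_nonneg]

theorem statement12 {k : ℕ} (hk : 2 ≤ k)
    (Qstar : Fin k → Measure 𝒳) [∀ i, IsProbabilityMeasure (Qstar i)]
    (μ : Measure 𝒳) [SigmaFinite μ]
    (qstar : Fin k → 𝒳 → ℝ) (hq_meas : ∀ i, Measurable (qstar i))
    (hq_nonneg : ∀ i x, 0 ≤ qstar i x)
    (hQq : ∀ i, Qstar i = μ.withDensity fun x => ENNReal.ofReal (qstar i x))
    (α : Fin k → ℝ) (hα : α ∈ stdSimplex ℝ (Fin k)) (hαpos : ∀ i, 0 < α i) :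
    (MeasLinIndep fun i =>
        (∑ j, Qstar j).withDensity fun x => ENNReal.ofReal (bayesPred α qstar x i))
      ↔ MeasLinIndep Qstar :=
  statement12_general Qstar μ qstar hq_meas hq_nonneg hQq α hαpos

end
end

section
/- Let Q*₁,…,Q*_k be probability measures on (𝒳,𝒜) with densities q*₁,…,q*_k with respect to a σ-finite measure μ, let α ∈ 𝒲_k with αᵢ > 0 for all i, and let f^α be the Bayes predictor, f^α_i(x) = αᵢ q*ᵢ(x) / ∑_{j=1}^k αⱼ q*ⱼ(x). Then α is a fixed point of the confusion matrix of f^α: α = M(f^α) α, where M(f^α)_{ij} = ∫ f^α_i(x) Q*ⱼ(dx). -/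
open MeasureTheory Real
open scoped ENNReal

section

variable {𝒳 : Type*} [MeasurableSpace 𝒳]

-- STATEMENT 13
theorem statement13 {k : ℕ} (hk : 2 ≤ k)
    (Qstar : Fin k → Measure 𝒳) [∀ i, IsProbabilityMeasure (Qstar i)]
    (μ : Measure 𝒳) [SigmaFinite μ]
    (qstar : Fin k → 𝒳 → ℝ) (hq_meas : ∀ i, Measurable (qstar i))
    (hq_nonneg : ∀ i x, 0 ≤ qstar i x)
    (hQq : ∀ i, Qstar i = μ.withDensity fun x => ENNReal.ofReal (qstar i x))
    (α : Fin k → ℝ) (hα : α ∈ stdSimplex ℝ (Fin k)) (hαpos : ∀ i, 0 < α i) :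
    ∀ i, α i = ∑ j, (∫ x, bayesPred α qstar x i ∂(Qstar j)) * α j := by
  intro i
  -- lintegral of densities is 1
  have hlint : ∀ j, ∫⁻ x, ENNReal.ofReal (qstar j x) ∂μ = 1 := by
    intro j
    have h1 : Qstar j Set.univ = 1 := measure_univ
    rw [hQq j] at h1
    simpa [withDensity_apply _ MeasurableSet.univ] using h1
  -- integrability of q_j
  have hInt : ∀ j, Integrable (qstar j) μ := by
    intro j
    have := integrable_toReal_of_lintegral_ne_top
      (μ := μ) (f := fun x => ENNReal.ofReal (qstar j x))
      ((ENNReal.measurable_ofReal.comp (hq_meas j)).aemeasurable)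
      (by rw [hlint j]; exact ENNReal.one_ne_top)
    refine this.congr (Filter.Eventually.of_forall fun x => ?_)
    exact ENNReal.toReal_ofReal (hq_nonneg j x)
  -- integral of q_i equals 1
  have hint1 : ∫ x, qstar i x ∂μ = 1 := by
    rw [integral_eq_lintegral_of_nonneg_ae (Filter.Eventually.of_forall (hq_nonneg i))
      (hq_meas i).aestronglyMeasurable, hlint i]
    simp
  -- bayes predictor bounds
  have hb_nonneg : ∀ x, 0 ≤ bayesPred α qstar x i := fun x =>
    div_nonneg (mul_nonneg (hαpos i).le (hq_nonneg i x))
      (Finset.sum_nonneg fun j _ => mul_nonneg (hαpos j).le (hq_nonneg j x))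
  have hb_le : ∀ x, bayesPred α qstar x i ≤ 1 := by
    intro x
    unfold bayesPred
    rcases eq_or_lt_of_le (Finset.sum_nonneg fun j (_ : j ∈ Finset.univ) =>
      mul_nonneg (hαpos j).le (hq_nonneg j x)) with h | h
    · simp [← h]
    · exact div_le_one_of_le₀ (Finset.single_le_sum
        (fun j _ => mul_nonneg (hαpos j).le (hq_nonneg j x)) (Finset.mem_univ i)) h.le
  have hb_meas : Measurable (fun x => bayesPred α qstar x i) := by
    unfold bayesPred
    exact ((hq_meas i).const_mul _).div (Finset.measurable_sum _ fun j _ => (hq_meas j).const_mul _)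
  -- rewrite each ∫ over Qstar j
  have hrw : ∀ j, (∫ x, bayesPred α qstar x i ∂(Qstar j))
      = ∫ x, qstar j x * bayesPred α qstar x i ∂μ := by
    intro j
    rw [hQq j]
    have : (fun x => ENNReal.ofReal (qstar j x))
        = (fun x => ((fun x => (qstar j x).toNNReal) x : ℝ≥0∞)) := rfl
    rw [this, integral_withDensity_eq_integral_smul
      (show Measurable (fun x => (qstar j x).toNNReal) from
        measurable_real_toNNReal.comp (hq_meas j)) _]
    refine integral_congr_ae (Filter.Eventually.of_forall fun x => ?_)
    simp [NNReal.smul_def, Real.coe_toNNReal _ (hq_nonneg j x)]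
  -- integrability of q_j * f_i
  have hIntf : ∀ j, Integrable (fun x => qstar j x * bayesPred α qstar x i) μ := by
    intro j
    refine (hInt j).mono' ((hq_meas j).mul hb_meas).aestronglyMeasurable
      (Filter.Eventually.of_forall fun x => ?_)
    rw [Real.norm_eq_abs, abs_of_nonneg (mul_nonneg (hq_nonneg j x) (hb_nonneg x))]
    calc qstar j x * bayesPred α qstar x i ≤ qstar j x * 1 :=
          mul_le_mul_of_nonneg_left (hb_le x) (hq_nonneg j x)
      _ = qstar j x := mul_one _
  -- main computation
  calc α i = α i * ∫ x, qstar i x ∂μ := by rw [hint1, mul_one]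
    _ = ∫ x, α i * qstar i x ∂μ := (integral_const_mul _ _).symm
    _ = ∫ x, ∑ j, (qstar j x * bayesPred α qstar x i) * α j ∂μ := by
        refine integral_congr_ae (Filter.Eventually.of_forall fun x => ?_)
        show α i * qstar i x = ∑ j, (qstar j x * bayesPred α qstar x i) * α j
        have : ∑ j, (qstar j x * bayesPred α qstar x i) * α j
            = bayesPred α qstar x i * ∑ j, α j * qstar j x := by
          rw [Finset.mul_sum]; exact Finset.sum_congr rfl fun j _ => by ring
        rw [this]
        unfold bayesPred
        rcases eq_or_ne (∑ j, α j * qstar j x) 0 with h | h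
        · have hq0 : qstar i x = 0 := by
            have := (Finset.sum_eq_zero_iff_of_nonneg
              (fun j (_ : j ∈ Finset.univ) => mul_nonneg (hαpos j).le (hq_nonneg j x))).mp h
              i (Finset.mem_univ i)
            exact (mul_eq_zero.mp this).resolve_left (hαpos i).ne'
          simp [h, hq0]
        · rw [div_mul_cancel₀ _ h]
    _ = ∑ j, ∫ x, (qstar j x * bayesPred α qstar x i) * α j ∂μ := by
        rw [integral_finset_sum]
        exact fun j _ => (hIntf j).mul_const _
    _ = ∑ j, (∫ x, bayesPred α qstar x i ∂(Qstar j)) * α j := by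
        refine Finset.sum_congr rfl fun j _ => ?_
        rw [hrw j, integral_mul_const]

end
end
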